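/- arXiv:2507.11891 — 2 statements merged into one kernel-verified Lean document; each statement's English description precedes it below -/
import Mathlib

section
/- For any 0 ≤ α ≤ 1, when the UCB algorithm UCB_α runs jointly with any other algorithm A under data sharing, the sum of the expected regrets of the two algorithms satisfies E[R_T(UCB_α | (A, UCB_α))] + E[R_T(A | (A, UCB_α))] = Ω(log T) if α = 0, and Ω(T^α) if 0 < α ≤ 1. -/
open MeasureTheory ProbabilityTheory Finset

namespace BanditAB

/-- A history: the list of reward samples collected so far, for each arm. -/
abbrev Hist (K : ℕ) := Fin K → List ℝ

/-- Empirical mean of a list of samples. -/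
noncomputable def empMean (l : List ℝ) : ℝ := l.sum / l.length

/-- Total number of samples in a history. -/
def totalCount {K : ℕ} (h : Hist K) : ℕ := ∑ k, (h k).length

/-- An arm maximizing an `EReal`-valued score (ties broken by a fixed rule). -/
noncomputable def argmaxArm {K : ℕ} [NeZero K] (f : Fin K → EReal) : Fin K :=
  (List.argmax f (List.finRange K)).getD ⟨0, Nat.pos_of_ne_zero (NeZero.ne K)⟩

/-- Greedy score: empirical mean of the samples of an arm, `⊤` if the arm has no samples. -/
noncomputable def greedyScore {K : ℕ} (h : Hist K) (k : Fin K) : EReal :=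
  if h k = [] then ⊤ else ((empMean (h k) : ℝ) : EReal)

/-- The arm chosen by the greedy rule: highest empirical mean (empty history counts as `+∞`). -/
noncomputable def greedyArm {K : ℕ} [NeZero K] (h : Hist K) : Fin K :=
  argmaxArm (greedyScore h)

/-- The UCB confidence-bound width, for a total sample count `n` and per-arm count `s`:
`sqrt (2 log n / s)` for `α = 0` and `sqrt (2 (n^α - 1) / (α s))` for `α ≠ 0`. -/
noncomputable def ucbWidth (α : ℝ) (n s : ℕ) : ℝ :=
  if α = 0 then Real.sqrt (2 * Real.log n / s)
  else Real.sqrt (2 * ((n : ℝ) ^ α - 1) / (α * s))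

/-- UCB score of an arm: empirical mean plus confidence width, `⊤` if the arm has no samples. -/
noncomputable def ucbScore {K : ℕ} (α : ℝ) (h : Hist K) (k : Fin K) : EReal :=
  if h k = [] then ⊤
  else (((empMean (h k) + ucbWidth α (totalCount h) (h k).length : ℝ)) : EReal)

/-- The arm chosen by the UCB rule. -/
noncomputable def ucbArm {K : ℕ} [NeZero K] (α : ℝ) (h : Hist K) : Fin K :=
  argmaxArm (ucbScore α h)

/-- A (possibly randomized) algorithm: a map from a history and a uniform random seed
in `[0,1]` to an arm. -/
abbrev Alg (K : ℕ) := Hist K → ℝ → Fin K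

/-- The greedy algorithm (ignores its random seed). -/
noncomputable def grd {K : ℕ} [NeZero K] : Alg K := fun h _ => greedyArm h

/-- The UCB algorithm with exploration parameter `α` (ignores its random seed). -/
noncomputable def ucb {K : ℕ} [NeZero K] (α : ℝ) : Alg K := fun h _ => ucbArm α h

/-- Map a value `v ∈ [0,1)` to a uniformly distributed arm. -/
noncomputable def uniformArm {K : ℕ} [NeZero K] (v : ℝ) : Fin K :=
  ⟨min (K - 1) ⌊v * K⌋₊,
    lt_of_le_of_lt (min_le_left _ _) (Nat.sub_lt (Nat.pos_of_ne_zero (NeZero.ne K)) one_pos)⟩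

/-- The ε-greedy algorithm with parameters `α, C`: with probability
`ε = min {1, C / |H|^(1-α)}` it pulls a uniformly random arm, otherwise it is greedy;
if some arm has no samples it forgoes exploration and pulls an arm with no history. -/
noncomputable def epsGreedy {K : ℕ} [NeZero K] (α C : ℝ) : Alg K := fun h u =>
  if ∃ k, h k = [] then greedyArm h
  else
    let ε : ℝ := min 1 (C / (totalCount h : ℝ) ^ (1 - α))
    if u < ε then uniformArm (u / ε) else greedyArm h

/-- The mean reward of arm `k`, for reward distributions `D`. -/
noncomputable def armMean {K : ℕ} (D : Fin K → Measure ℝ) (k : Fin K) : ℝ := ∫ x, x ∂(D k)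

/-- The minimum gap `Δ_min = min_{k ≠ k*} (μ* - μ_k)`. -/
noncomputable def minGap {K : ℕ} (D : Fin K → Measure ℝ) (kstar : Fin K) : ℝ :=
  ⨅ k : {j : Fin K // j ≠ kstar}, (armMean D kstar - armMean D k.1)

/-- The environment hypotheses: the reward tapes `X k s` (the `s`-th reward sample of arm
`k`) are distributed according to `D k` (supported on `[0,1]`), the algorithms' seeds
`U i t` are uniform on `[0,1]`, and all of these random variables are mutually independent. -/
def IsEnv {K : ℕ} {Ω : Type*} [MeasurableSpace Ω] (P : Measure Ω)
    (X : Fin K → ℕ → Ω → ℝ) (U : Fin 2 → ℕ → Ω → ℝ) (D : Fin K → Measure ℝ) : Prop :=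
  (∀ k, IsProbabilityMeasure (D k)) ∧
  (∀ k, D k (Set.Icc (0:ℝ) 1)ᶜ = 0) ∧
  (∀ k s, Measurable (X k s)) ∧
  (∀ i t, Measurable (U i t)) ∧
  (∀ k s, Measure.map (X k s) P = D k) ∧
  (∀ i t, Measure.map (U i t) P = volume.restrict (Set.Icc (0:ℝ) 1)) ∧
  iIndepFun
    (Sum.elim (fun p : Fin K × ℕ => X p.1 p.2) (fun p : Fin 2 × ℕ => U p.1 p.2)) P

/-- Append a new sample `y` for arm `k` to the history `h`. -/
noncomputable def push {K : ℕ} (h : Hist K) (k : Fin K) (y : ℝ) : Hist K :=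
  Function.update h k (h k ++ [y])

variable {K : ℕ} [NeZero K] {Ω : Type*}

/-- The shared history of a joint run of two algorithms under data sharing: at each timestep,
both algorithms select arms based on the shared history, each observes a fresh reward from
the tape of its chosen arm, and both samples are added to the shared history. -/
noncomputable def jointHist (X : Fin K → ℕ → Ω → ℝ) (U : Fin 2 → ℕ → Ω → ℝ)
    (A₁ A₂ : Alg K) : ℕ → Ω → Hist K
  | 0, _ => fun _ => []
  | t + 1, ω =>
    let h := jointHist X U A₁ A₂ t ω
    let i1 := A₁ h (U 0 t ω)
    let h1 := push h i1 (X i1 (h i1).length ω)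
    let i2 := A₂ h (U 1 t ω)
    push h1 i2 (X i2 (h1 i2).length ω)

/-- The arm pulled by the first algorithm at timestep `t` in the joint run. -/
noncomputable def arm1 (X : Fin K → ℕ → Ω → ℝ) (U : Fin 2 → ℕ → Ω → ℝ)
    (A₁ A₂ : Alg K) (t : ℕ) (ω : Ω) : Fin K :=
  A₁ (jointHist X U A₁ A₂ t ω) (U 0 t ω)

/-- The arm pulled by the second algorithm at timestep `t` in the joint run. -/
noncomputable def arm2 (X : Fin K → ℕ → Ω → ℝ) (U : Fin 2 → ℕ → Ω → ℝ)
    (A₁ A₂ : Alg K) (t : ℕ) (ω : Ω) : Fin K :=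
  A₂ (jointHist X U A₁ A₂ t ω) (U 1 t ω)

/-- The reward received by the first algorithm at timestep `t` in the joint run. -/
noncomputable def reward1 (X : Fin K → ℕ → Ω → ℝ) (U : Fin 2 → ℕ → Ω → ℝ)
    (A₁ A₂ : Alg K) (t : ℕ) (ω : Ω) : ℝ :=
  X (arm1 X U A₁ A₂ t ω) ((jointHist X U A₁ A₂ t ω (arm1 X U A₁ A₂ t ω)).length) ω

/-- The reward received by the second algorithm at timestep `t` in the joint run. -/
noncomputable def reward2 (X : Fin K → ℕ → Ω → ℝ) (U : Fin 2 → ℕ → Ω → ℝ)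
    (A₁ A₂ : Alg K) (t : ℕ) (ω : Ω) : ℝ :=
  let h := jointHist X U A₁ A₂ t ω
  let h1 := push h (arm1 X U A₁ A₂ t ω) (reward1 X U A₁ A₂ t ω)
  X (arm2 X U A₁ A₂ t ω) ((h1 (arm2 X U A₁ A₂ t ω)).length) ω

variable [MeasurableSpace Ω]

/-- The expected regret of the first algorithm over horizon `T` in the joint run, with
respect to the best mean `μstar`. -/
noncomputable def expRegret1 (P : Measure Ω) (X : Fin K → ℕ → Ω → ℝ)
    (U : Fin 2 → ℕ → Ω → ℝ) (A₁ A₂ : Alg K) (μstar : ℝ) (T : ℕ) : ℝ :=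
  T * μstar - ∫ ω, (∑ t ∈ Finset.range T, reward1 X U A₁ A₂ t ω) ∂P

/-- The expected regret of the second algorithm over horizon `T` in the joint run. -/
noncomputable def expRegret2 (P : Measure Ω) (X : Fin K → ℕ → Ω → ℝ)
    (U : Fin 2 → ℕ → Ω → ℝ) (A₁ A₂ : Alg K) (μstar : ℝ) (T : ℕ) : ℝ :=
  T * μstar - ∫ ω, (∑ t ∈ Finset.range T, reward2 X U A₁ A₂ t ω) ∂P

/-- The number of pulls of arm `k` by the first algorithm in the first `T` timesteps of the
joint run. -/
noncomputable def pulls1 (X : Fin K → ℕ → Ω → ℝ) (U : Fin 2 → ℕ → Ω → ℝ)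
    (A₁ A₂ : Alg K) (k : Fin K) (T : ℕ) (ω : Ω) : ℕ :=
  ((Finset.range T).filter fun t => arm1 X U A₁ A₂ t ω = k).card

/-- The history of a single algorithm running individually (no data sharing). -/
noncomputable def soloHist (X : Fin K → ℕ → Ω → ℝ) (U : Fin 2 → ℕ → Ω → ℝ)
    (A : Alg K) : ℕ → Ω → Hist K
  | 0, _ => fun _ => []
  | t + 1, ω =>
    let h := soloHist X U A t ω
    let i := A h (U 0 t ω)
    push h i (X i (h i).length ω)

/-- The reward received at timestep `t` by a single algorithm running individually. -/
noncomputable def soloReward (X : Fin K → ℕ → Ω → ℝ) (U : Fin 2 → ℕ → Ω → ℝ)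
    (A : Alg K) (t : ℕ) (ω : Ω) : ℝ :=
  let h := soloHist X U A t ω
  let i := A h (U 0 t ω)
  X i (h i).length ω

/-- The expected regret over horizon `T` of a single algorithm running individually. -/
noncomputable def soloExpRegret (P : Measure Ω) (X : Fin K → ℕ → Ω → ℝ)
    (U : Fin 2 → ℕ → Ω → ℝ) (A : Alg K) (μstar : ℝ) (T : ℕ) : ℝ :=
  T * μstar - ∫ ω, (∑ t ∈ Finset.range T, soloReward X U A t ω) ∂P


/-- One-way data sharing from `A` to greedy: the pair of histories
(shared history used by greedy, own history of `A`). At each timestep, `A` selects an arm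
based on its own history only, greedy selects an arm based on the shared history, and both
new samples are added to the shared history while only `A`'s sample is added to its own. -/
noncomputable def oneWayHists (X : Fin K → ℕ → Ω → ℝ) (U : Fin 2 → ℕ → Ω → ℝ)
    (A : Alg K) : ℕ → Ω → Hist K × Hist K
  | 0, _ => (fun _ => [], fun _ => [])
  | t + 1, ω =>
    let s := oneWayHists X U A t ω
    let h := s.1
    let hA := s.2
    let iA := A hA (U 1 t ω)
    let yA := X iA (h iA).length ω
    let h1 := push h iA yA
    let iG := greedyArm h
    let yG := X iG (h1 iG).length ω
    (push h1 iG yG, push hA iA yA)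

/-- The arm pulled by algorithm `A` at timestep `t` under one-way data sharing to greedy. -/
noncomputable def oneWayArmA (X : Fin K → ℕ → Ω → ℝ) (U : Fin 2 → ℕ → Ω → ℝ)
    (A : Alg K) (t : ℕ) (ω : Ω) : Fin K :=
  A (oneWayHists X U A t ω).2 (U 1 t ω)

/-- The arm pulled by the greedy algorithm at timestep `t` under one-way data sharing. -/
noncomputable def oneWayArmG (X : Fin K → ℕ → Ω → ℝ) (U : Fin 2 → ℕ → Ω → ℝ)
    (A : Alg K) (t : ℕ) (ω : Ω) : Fin K :=
  greedyArm (oneWayHists X U A t ω).1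

/-- The reward received by the greedy algorithm at timestep `t` under one-way data sharing. -/
noncomputable def oneWayGrdReward (X : Fin K → ℕ → Ω → ℝ) (U : Fin 2 → ℕ → Ω → ℝ)
    (A : Alg K) (t : ℕ) (ω : Ω) : ℝ :=
  let h := (oneWayHists X U A t ω).1
  let iA := oneWayArmA X U A t ω
  let h1 := push h iA (X iA (h iA).length ω)
  X (oneWayArmG X U A t ω) ((h1 (oneWayArmG X U A t ω)).length) ω

/-- The number of pulls of arm `k` by algorithm `A` in the first `T` timesteps under
one-way data sharing. -/
noncomputable def oneWayPullsA (X : Fin K → ℕ → Ω → ℝ) (U : Fin 2 → ℕ → Ω → ℝ)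
    (A : Alg K) (k : Fin K) (T : ℕ) (ω : Ω) : ℕ :=
  ((Finset.range T).filter fun t => oneWayArmA X U A t ω = k).card

/-- The expected regret of the greedy algorithm over horizon `T` under one-way data
sharing from `A` to greedy. -/
noncomputable def oneWayGrdExpRegret [MeasurableSpace Ω] (P : Measure Ω)
    (X : Fin K → ℕ → Ω → ℝ) (U : Fin 2 → ℕ → Ω → ℝ) (A : Alg K) (μstar : ℝ) (T : ℕ) : ℝ :=
  T * μstar - ∫ ω, (∑ t ∈ Finset.range T, oneWayGrdReward X U A t ω) ∂P

/-- EXP3 exploration rate at (1-indexed) timestep `t`: `min {1/K, K^(-2/3) t^(-1/3)}`. -/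
noncomputable def exp3eps (K t : ℕ) : ℝ :=
  min (1 / (K : ℝ)) ((K : ℝ) ^ (-(2:ℝ)/3) * (t : ℝ) ^ (-(1:ℝ)/3))

/-- EXP3 sampling probability of arm `k` at (1-indexed) timestep `t`, given the cumulative
importance-weighted reward estimates `Yhat`. -/
noncomputable def exp3prob {K : ℕ} (t : ℕ) (Yhat : Fin K → ℝ) (k : Fin K) : ℝ :=
  (1 - K * exp3eps K t) * Real.exp (exp3eps K (t - 1) * Yhat k)
      / (∑ k', Real.exp (exp3eps K (t - 1) * Yhat k'))
    + exp3eps K t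

/-- Sample from the categorical distribution with weights `ρ` using a uniform seed `u`:
returns the arm `k` whose cumulative-probability interval contains `u`. -/
noncomputable def sampleCat {K : ℕ} [NeZero K] (ρ : Fin K → ℝ) (u : ℝ) : Fin K :=
  let cum : Fin K → ℝ := fun k => ∑ j ∈ Finset.univ.filter (fun j : Fin K => (j:ℕ) < (k:ℕ)), ρ j
  if h : (Finset.univ.filter fun k => cum k ≤ u).Nonempty
  then (Finset.univ.filter fun k => cum k ≤ u).max' h
  else ⟨0, Nat.pos_of_ne_zero (NeZero.ne K)⟩

/-- The state of a joint run of EXP3 and greedy under one-way data sharing (EXP3 → grd):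
the shared history (used by greedy) and EXP3's cumulative importance-weighted reward
estimates `Ŷ` (built from EXP3's own data only). -/
noncomputable def exp3State (X : Fin K → ℕ → Ω → ℝ) (U : Fin 2 → ℕ → Ω → ℝ) :
    ℕ → Ω → Hist K × (Fin K → ℝ)
  | 0, _ => (fun _ => [], fun _ => 0)
  | t + 1, ω =>
    let s := exp3State X U t ω
    let h := s.1
    let Yhat := s.2
    let ρ := exp3prob (t + 1) Yhat
    let iE := sampleCat ρ (U 1 t ω)
    let yE := X iE (h iE).length ω
    let h1 := push h iE yE
    let iG := greedyArm h
    let yG := X iG (h1 iG).length ω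
    (push h1 iG yG, fun k => Yhat k + (if k = iE then yE / ρ k else 0))

/-- The arm pulled by EXP3 at timestep `t`. -/
noncomputable def exp3Arm (X : Fin K → ℕ → Ω → ℝ) (U : Fin 2 → ℕ → Ω → ℝ)
    (t : ℕ) (ω : Ω) : Fin K :=
  sampleCat (exp3prob (t + 1) (exp3State X U t ω).2) (U 1 t ω)

/-- The reward received by EXP3 at timestep `t`. -/
noncomputable def exp3Reward (X : Fin K → ℕ → Ω → ℝ) (U : Fin 2 → ℕ → Ω → ℝ)
    (t : ℕ) (ω : Ω) : ℝ :=
  X (exp3Arm X U t ω) (((exp3State X U t ω).1 (exp3Arm X U t ω)).length) ω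

/-- The reward received by the greedy algorithm at timestep `t`, when run jointly with EXP3
under one-way data sharing (EXP3 → grd). -/
noncomputable def exp3GrdReward (X : Fin K → ℕ → Ω → ℝ) (U : Fin 2 → ℕ → Ω → ℝ)
    (t : ℕ) (ω : Ω) : ℝ :=
  let h := (exp3State X U t ω).1
  let h1 := push h (exp3Arm X U t ω) (exp3Reward X U t ω)
  X (greedyArm h) ((h1 (greedyArm h)).length) ω

/-- The expected regret of the greedy algorithm over horizon `T`, when run jointly with
EXP3 under one-way data sharing (EXP3 → grd). -/
noncomputable def exp3GrdExpRegret [MeasurableSpace Ω] (P : Measure Ω)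
    (X : Fin K → ℕ → Ω → ℝ) (U : Fin 2 → ℕ → Ω → ℝ) (μstar : ℝ) (T : ℕ) : ℝ :=
  T * μstar - ∫ ω, (∑ t ∈ Finset.range T, exp3GrdReward X U t ω) ∂P

/-- The expected regret of EXP3 over horizon `T`, when run jointly with the greedy
algorithm under one-way data sharing (EXP3 → grd). -/
noncomputable def exp3ExpRegret [MeasurableSpace Ω] (P : Measure Ω)
    (X : Fin K → ℕ → Ω → ℝ) (U : Fin 2 → ℕ → Ω → ℝ) (μstar : ℝ) (T : ℕ) : ℝ :=
  T * μstar - ∫ ω, (∑ t ∈ Finset.range T, exp3Reward X U t ω) ∂P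


end BanditAB


/-!
UCB cannot stop exploring, whatever its partner does. Write `g(n) = explorationRate α n` for
`2 log n`, resp. `2 (n^α - 1) / α`, so that the UCB bonus of an arm with `s` samples is
`√(g(n) / s)`. While some arm has fewer than `L` samples and `g > 4 L`, the bonus of that arm
beats every arm with `4 L` samples by more than the range of the empirical means, so UCB only
pulls arms with fewer than `4 L` samples; as it never pulls the same (arm, sample count) pair
twice, this cannot go on for `T / 2 > 4 K L` steps. Hence at time `T` every arm has
`L ≈ g(T) / K` samples.

Since the history of arm `k` is always an initial segment of its reward tape, the two regrets
add up to `∑ₖ nₖ Δₖ` minus the centered sums of the first `nₖ` tape entries. These noise terms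
are evaluated at random counts `nₖ`, so they are bounded pathwise by sums over all counts
`m ≤ 2 T` of the excursions `(Sₘ - ε m)⁺`; by Hoeffding's lemma the expectations of these
excursions decay geometrically in `m`. With `ε = δ / 4` for the minimal gap `δ` this gives a
regret sum of at least `δ L / 2 - C`, i.e. of order `g(T)`.
-/

namespace BanditAB

open Filter Set Real
open scoped NNReal

section History

variable {K : ℕ}

lemma length_push (h : Hist K) (i k : Fin K) (y : ℝ) :
    (push h i y k).length = (h k).length + if i = k then 1 else 0 := by
  by_cases hk : i = k
  · subst hk; simp [push]
  · simp [push, Ne.symm hk, hk]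

lemma mem_push {h : Hist K} {i k : Fin K} {x y : ℝ} (hx : x ∈ push h i y k) :
    x ∈ h k ∨ x = y := by
  by_cases hk : k = i
  · subst hk; simpa [push] using hx
  · simp only [push, Function.update_of_ne hk] at hx
    exact Or.inl hx

lemma totalCount_push (h : Hist K) (i : Fin K) (y : ℝ) :
    totalCount (push h i y) = totalCount h + 1 := by
  simp [totalCount, length_push, Finset.sum_add_distrib]

lemma sum_sum_range_length_push (f : Fin K → ℕ → ℝ) (h : Hist K) (i : Fin K) (y : ℝ) :
    ∑ k, ∑ s ∈ range (push h i y k).length, f k s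
      = ∑ k, ∑ s ∈ range (h k).length, f k s + f i (h i).length := by
  have hk : ∀ k, ∑ s ∈ range (push h i y k).length, f k s
      = ∑ s ∈ range (h k).length, f k s + if i = k then f k (h k).length else 0 := by
    intro k
    rw [length_push]
    split_ifs <;> simp [sum_range_succ]
  simp [hk, Finset.sum_add_distrib]

end History

section JointRun

variable {K : ℕ} {Ω : Type*}
  (X : Fin K → ℕ → Ω → ℝ) (U : Fin 2 → ℕ → Ω → ℝ) (A₁ A₂ : Alg K)

lemma jointHist_succ (t : ℕ) (ω : Ω) :
    jointHist X U A₁ A₂ (t + 1) ω =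
      push (push (jointHist X U A₁ A₂ t ω) (arm1 X U A₁ A₂ t ω) (reward1 X U A₁ A₂ t ω))
        (arm2 X U A₁ A₂ t ω) (reward2 X U A₁ A₂ t ω) := rfl

lemma reward2_eq (t : ℕ) (ω : Ω) :
    reward2 X U A₁ A₂ t ω = X (arm2 X U A₁ A₂ t ω)
      ((jointHist X U A₁ A₂ t ω (arm2 X U A₁ A₂ t ω)).length
        + if arm1 X U A₁ A₂ t ω = arm2 X U A₁ A₂ t ω then 1 else 0) ω := by
  rw [← length_push]
  rfl

lemma totalCount_jointHist (t : ℕ) (ω : Ω) :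
    totalCount (jointHist X U A₁ A₂ t ω) = 2 * t := by
  induction t with
  | zero => simp [totalCount, jointHist]
  | succ t ih => rw [jointHist_succ, totalCount_push, totalCount_push, ih]; ring

lemma length_jointHist_succ (t : ℕ) (ω : Ω) (k : Fin K) :
    (jointHist X U A₁ A₂ (t + 1) ω k).length = (jointHist X U A₁ A₂ t ω k).length
      + (if arm1 X U A₁ A₂ t ω = k then 1 else 0)
      + (if arm2 X U A₁ A₂ t ω = k then 1 else 0) := by
  rw [jointHist_succ, length_push, length_push]

lemma monotone_length_jointHist (ω : Ω) (k : Fin K) :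
    Monotone fun t => (jointHist X U A₁ A₂ t ω k).length :=
  monotone_nat_of_le_succ fun t => by rw [length_jointHist_succ]; omega

lemma injective_arm2_length_jointHist (ω : Ω) :
    Function.Injective fun t =>
      (arm2 X U A₁ A₂ t ω, (jointHist X U A₁ A₂ t ω (arm2 X U A₁ A₂ t ω)).length) := by
  have grows : ∀ t t', t < t' → arm2 X U A₁ A₂ t ω = arm2 X U A₁ A₂ t' ω →
      (jointHist X U A₁ A₂ t ω (arm2 X U A₁ A₂ t ω)).length
        < (jointHist X U A₁ A₂ t' ω (arm2 X U A₁ A₂ t' ω)).length := by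
    intro t t' htt' harm
    rw [← harm]
    calc _ < (jointHist X U A₁ A₂ (t + 1) ω (arm2 X U A₁ A₂ t ω)).length := by
          rw [length_jointHist_succ]; simp
      _ ≤ _ := monotone_length_jointHist X U A₁ A₂ ω _ htt'
  intro t t' heq
  simp only [Prod.mk.injEq] at heq
  rcases lt_trichotomy t t' with h | h | h
  · exact absurd heq.2 (grows t t' h heq.1).ne
  · exact h
  · exact absurd heq.2 (grows t' t h heq.1.symm).ne'

lemma mem_Icc_of_mem_jointHist {ω : Ω} (hX : ∀ k s, X k s ω ∈ Icc (0 : ℝ) 1) (t : ℕ) :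
    ∀ k, ∀ x ∈ jointHist X U A₁ A₂ t ω k, x ∈ Icc (0 : ℝ) 1 := by
  induction t with
  | zero => simp [jointHist]
  | succ t ih =>
    intro k x hx
    rw [jointHist_succ] at hx
    rcases mem_push hx with hx | rfl
    · rcases mem_push hx with hx | rfl
      · exact ih k x hx
      · exact hX _ _
    · exact hX _ _

lemma sum_range_reward_add_reward (T : ℕ) (ω : Ω) :
    ∑ t ∈ range T, (reward1 X U A₁ A₂ t ω + reward2 X U A₁ A₂ t ω)
      = ∑ k, ∑ s ∈ range (jointHist X U A₁ A₂ T ω k).length, X k s ω := by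
  induction T with
  | zero => simp [jointHist]
  | succ T ih =>
    rw [sum_range_succ, ih, jointHist_succ, sum_sum_range_length_push (fun k s => X k s ω),
      sum_sum_range_length_push (fun k s => X k s ω), add_assoc]
    rfl

end JointRun

section UCB

noncomputable def explorationRate (α : ℝ) (n : ℕ) : ℝ :=
  if α = 0 then 2 * Real.log n else 2 * ((n : ℝ) ^ α - 1) / α

lemma ucbWidth_eq_sqrt (α : ℝ) (n s : ℕ) :
    ucbWidth α n s = √(explorationRate α n / s) := by
  unfold ucbWidth explorationRate
  split_ifs
  · rfl
  · rw [div_div]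

lemma explorationRate_monotone {α : ℝ} (hα : 0 ≤ α) : Monotone (explorationRate α) := by
  intro a b hab
  unfold explorationRate
  split_ifs with h0
  · rcases Nat.eq_zero_or_pos a with rfl | ha
    · simpa using Real.log_natCast_nonneg b
    · gcongr
  · have := Real.rpow_le_rpow (Nat.cast_nonneg a) (Nat.cast_le.2 hab) hα
    gcongr

lemma explorationRate_le {α : ℝ} (hα0 : 0 ≤ α) (hα1 : α ≤ 1) (n : ℕ) :
    explorationRate α n ≤ 2 * n := by
  unfold explorationRate
  split_ifs with h0
  · linarith [Real.log_le_self (Nat.cast_nonneg (α := ℝ) n)]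
  · have hα : 0 < α := lt_of_le_of_ne hα0 (Ne.symm h0)
    have bernoulli : (n : ℝ) ^ α ≤ 1 + α * (n - 1) := by
      simpa using rpow_one_add_le_one_add_mul_self (s := (n : ℝ) - 1)
        (by linarith [(Nat.cast_nonneg n : (0 : ℝ) ≤ n)]) hα0 hα1
    rw [div_le_iff₀ hα]
    nlinarith

lemma explorationRate_zero (n : ℕ) : explorationRate 0 n = 2 * Real.log n := by
  simp [explorationRate]

lemma rpow_div_le_explorationRate {α : ℝ} (hα : 0 < α) {n : ℕ} (hn : 2 ≤ (n : ℝ) ^ α) :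
    (n : ℝ) ^ α / α ≤ explorationRate α n := by
  rw [explorationRate, if_neg hα.ne']
  gcongr
  linarith

variable {K : ℕ} [NeZero K]

lemma le_argmaxArm (f : Fin K → EReal) (k : Fin K) : f k ≤ f (argmaxArm f) := by
  obtain ⟨m, hm⟩ : ∃ m, List.argmax f (List.finRange K) = some m :=
    Option.ne_none_iff_exists'.1 fun h => by
      simp [List.argmax_eq_none, NeZero.ne K] at h
  rw [argmaxArm, hm]
  exact List.le_of_mem_argmax (List.mem_finRange k) hm

lemma empMean_mem_Icc {l : List ℝ} (hl : ∀ x ∈ l, x ∈ Icc (0 : ℝ) 1) (hne : l ≠ []) :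
    empMean l ∈ Icc (0 : ℝ) 1 := by
  have hpos : (0 : ℝ) < l.length := by exact_mod_cast List.length_pos_iff.2 hne
  refine ⟨div_nonneg (List.sum_nonneg fun x hx => (hl x hx).1) hpos.le, ?_⟩
  rw [empMean, div_le_one hpos]
  simpa using List.sum_le_card_nsmul l 1 fun x hx => (hl x hx).2

lemma length_ucbArm_lt {α : ℝ} {h : Hist K} (hmem : ∀ k, ∀ x ∈ h k, x ∈ Icc (0 : ℝ) 1)
    {L : ℕ} (hL : 0 < L) (hrate : 4 * L < explorationRate α (totalCount h))
    {k : Fin K} (hk : (h k).length < L) : (h (ucbArm α h)).length < 4 * L := by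
  set j := ucbArm α h
  have hmax : ucbScore α h k ≤ ucbScore α h j := le_argmaxArm _ k
  by_contra! hj
  have hj0 : h j ≠ [] := fun h0 => by rw [h0, List.length_nil] at hj; omega
  have hk0 : h k ≠ [] := fun h0 => by
    rw [ucbScore, if_pos h0, top_le_iff, ucbScore, if_neg hj0] at hmax
    exact EReal.coe_ne_top _ hmax
  rw [ucbScore, if_neg hk0, ucbScore, if_neg hj0, EReal.coe_le_coe_iff, ucbWidth_eq_sqrt,
    ucbWidth_eq_sqrt] at hmax
  set G := explorationRate α (totalCount h)
  have hLpos : (0 : ℝ) < L := by exact_mod_cast hL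
  have hG : 0 < G := lt_of_le_of_lt (by positivity) hrate
  have hw : 2 < √(G / L) := by
    rw [Real.lt_sqrt zero_le_two, lt_div_iff₀ hLpos]
    linarith
  have hwk : √(G / L) ≤ √(G / (h k).length) := by
    gcongr
    exact_mod_cast List.length_pos_iff.2 hk0
  have hwj : √(G / (h j).length) ≤ √(G / L) / 2 := by
    calc √(G / (h j).length) ≤ √(G / (4 * L)) := by gcongr; exact_mod_cast hj
      _ = √(G / L) / 2 := by
        rw [show G / (4 * L) = G / L / 2 ^ 2 by ring, Real.sqrt_div' _ (by positivity),
          Real.sqrt_sq zero_le_two]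
  have hmk := empMean_mem_Icc (hmem k) hk0
  have hmj := empMean_mem_Icc (hmem j) hj0
  linarith [hmk.1, hmj.2]

section JointRun

variable {Ω : Type*} (X : Fin K → ℕ → Ω → ℝ) (U : Fin 2 → ℕ → Ω → ℝ) (A : Alg K)

/-- The pigeonhole runs over the second half of the run, where the total sample count `2 t` is
at least `T`, so that the exploration rate still exceeds `4 L`. -/
lemma le_length_jointHist_ucb {α : ℝ} (hα : 0 ≤ α) {ω : Ω}
    (hX : ∀ k s, X k s ω ∈ Icc (0 : ℝ) 1) {T L : ℕ} (hL : 0 < L)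
    (hrate : 4 * L < explorationRate α T) (hwin : K * (4 * L) < T / 2) (k : Fin K) :
    L ≤ (jointHist X U A (ucb α) T ω k).length := by
  by_contra! hk
  have hmaps : ∀ t ∈ Finset.Ico ((T + 1) / 2) T,
      (arm2 X U A (ucb α) t ω, (jointHist X U A (ucb α) t ω (arm2 X U A (ucb α) t ω)).length)
        ∈ (Finset.univ : Finset (Fin K)) ×ˢ range (4 * L) := by
    intro t ht
    rw [Finset.mem_Ico] at ht
    simp only [Finset.mem_product, Finset.mem_univ, true_and, Finset.mem_range]
    refine length_ucbArm_lt (mem_Icc_of_mem_jointHist X U A (ucb α) hX t) hL ?_ (k := k) ?_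
    · rw [totalCount_jointHist]
      exact hrate.trans_le (explorationRate_monotone hα (by omega))
    · exact (monotone_length_jointHist X U A (ucb α) ω k ht.2.le).trans_lt hk
  have hcard := Finset.card_le_card_of_injOn _ hmaps
    (injective_arm2_length_jointHist X U A (ucb α) ω).injOn
  simp only [Nat.card_Ico, Finset.card_product, Finset.card_univ, Fintype.card_fin,
    Finset.card_range] at hcard
  omega

end JointRun

end UCB

noncomputable def excessSum (f : ℕ → ℝ) (ε : ℝ) (M : ℕ) : ℝ :=
  ∑ m ∈ range (M + 1), max (f m - ε * m) 0

lemma le_add_excessSum (f : ℕ → ℝ) (ε : ℝ) {n M : ℕ} (hn : n ≤ M) :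
    f n ≤ ε * n + excessSum f ε M := by
  have : max (f n - ε * n) 0 ≤ excessSum f ε M :=
    single_le_sum (f := fun m => max (f m - ε * m) 0) (fun _ _ => le_max_right _ _)
      (mem_range.2 (Nat.lt_succ_of_le hn))
  linarith [le_max_left (f n - ε * n) 0]

section Concentration

variable {Ω : Type*} [MeasurableSpace Ω] {μ : Measure Ω} [IsProbabilityMeasure μ]

lemma max_zero_le_exp_mul_div {t : ℝ} (ht : 0 < t) (y : ℝ) : max y 0 ≤ exp (t * y) / t := by
  rw [le_div_iff₀ ht]
  rcases le_total y 0 with hy | hy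
  · rw [max_eq_right hy, zero_mul]
    positivity
  · rw [max_eq_left hy]
    linarith [add_one_le_exp (t * y)]

lemma _root_.ProbabilityTheory.HasSubgaussianMGF.integral_max_sub_zero_le {Z : Ω → ℝ} {c : ℝ≥0}
    (hZ : HasSubgaussianMGF Z c μ) {t : ℝ} (ht : 0 < t) (a : ℝ) :
    ∫ ω, max (Z ω - a) 0 ∂μ ≤ exp (c * t ^ 2 / 2 - t * a) / t := by
  calc ∫ ω, max (Z ω - a) 0 ∂μ ≤ ∫ ω, exp (-(t * a)) * exp (t * Z ω) / t ∂μ := by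
        refine integral_mono (hZ.integrable.sub (integrable_const a)).pos_part
          (((hZ.integrable_exp_mul t).const_mul _).div_const _) fun ω => ?_
        refine (max_zero_le_exp_mul_div ht _).trans_eq ?_
        rw [← exp_add]
        ring_nf
    _ = exp (-(t * a)) * mgf Z μ t / t := by rw [integral_div, integral_const_mul]; rfl
    _ ≤ exp (-(t * a)) * exp (c * t ^ 2 / 2) / t := by gcongr; exact hZ.mgf_le t
    _ = exp (c * t ^ 2 / 2 - t * a) / t := by rw [← exp_add]; ring_nf

lemma integrable_excessSum {Y : ℕ → Ω → ℝ} (hY : ∀ s, Integrable (Y s) μ) (F : ℕ → Finset ℕ)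
    (ε : ℝ) (M : ℕ) : Integrable (fun ω => excessSum (fun m => ∑ s ∈ F m, Y s ω) ε M) μ :=
  integrable_finsetSum _ fun _ _ =>
    ((integrable_finsetSum _ fun s _ => hY s).sub (integrable_const _)).pos_part

/-- The excesses of the partial sums of an independent sub-Gaussian family over the drift
`ε m` have expectations decaying geometrically in `m`, so that the expected `excessSum` is
bounded independently of the horizon. -/
lemma integral_excessSum_le {Y : ℕ → Ω → ℝ} (hindep : iIndepFun Y μ) {c : ℝ≥0}
    (hc : 0 < c) (hY : ∀ s, HasSubgaussianMGF (Y s) c μ) {ε : ℝ} (hε : 0 < ε) (M : ℕ)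
    (F : ℕ → Finset ℕ) (hF : ∀ m ≤ M, (F m).card = m) :
    ∫ ω, excessSum (fun m => ∑ s ∈ F m, Y s ω) ε M ∂μ
      ≤ c / ε * (1 - exp (-(ε ^ 2 / (2 * c))))⁻¹ := by
  have hc' : (0 : ℝ) < c := hc
  set r := exp (-(ε ^ 2 / (2 * c)))
  have hr1 : r < 1 := exp_lt_one_iff.2 (by simp only [neg_lt_zero]; positivity)
  have hsum : ∀ m ≤ M, HasSubgaussianMGF (fun ω => ∑ s ∈ F m, Y s ω) (m * c) μ := by
    intro m hm
    simpa [hF m hm] using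
      HasSubgaussianMGF.sum_of_iIndepFun hindep (c := fun _ => c) (s := F m) fun s _ => hY s
  have hterm : ∀ m ≤ M, ∫ ω, max (∑ s ∈ F m, Y s ω - ε * m) 0 ∂μ ≤ c / ε * r ^ m := by
    intro m hm
    refine ((hsum m hm).integral_max_sub_zero_le (t := ε / c) (by positivity) (ε * m)).trans_eq ?_
    rw [← exp_nat_mul, div_eq_mul_inv, mul_comm, inv_div]
    congr 2
    push_cast
    field_simp
    ring
  have hgeom : ∑ m ∈ range (M + 1), r ^ m ≤ (1 - r)⁻¹ := by
    simpa [← Finset.range_eq_Ico] using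
      geom_sum_Ico_le_of_lt_one (m := 0) (n := M + 1) (exp_pos _).le hr1
  have hint : ∀ m ∈ range (M + 1),
      Integrable (fun ω => max (∑ s ∈ F m, Y s ω - ε * m) 0) μ := fun m _ =>
    ((integrable_finsetSum _ fun s _ => (hY s).integrable).sub (integrable_const _)).pos_part
  simp only [excessSum]
  rw [integral_finsetSum _ hint]
  calc ∑ m ∈ range (M + 1), ∫ ω, max (∑ s ∈ F m, Y s ω - ε * m) 0 ∂μ
      ≤ ∑ m ∈ range (M + 1), c / ε * r ^ m :=
        sum_le_sum fun m hm => hterm m (Nat.lt_succ_iff.1 (mem_range.1 hm))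
    _ ≤ c / ε * (1 - r)⁻¹ := by rw [← mul_sum]; gcongr

end Concentration

section Elementary

lemma exists_pos_le_sub_of_lt {ι : Type*} [Finite ι] {f : ι → ℝ} {i₀ : ι}
    (h : ∀ i, i ≠ i₀ → f i < f i₀) : ∃ δ > 0, ∀ i ≠ i₀, δ ≤ f i₀ - f i := by
  rcases isEmpty_or_nonempty {i // i ≠ i₀} with hempty | hne
  · exact ⟨1, one_pos, fun i hi => (hempty.false ⟨i, hi⟩).elim⟩
  · obtain ⟨j, hj⟩ := Finite.exists_min fun i : {i // i ≠ i₀} => f i₀ - f i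
    exact ⟨_, sub_pos.2 (h j j.2), fun i hi => hj ⟨i, hi⟩⟩

lemma exists_pos_mul_le_of_tendsto {f φ : ℕ → ℝ} (hφ : Tendsto φ atTop atTop) {a b : ℝ}
    (ha : 0 < a) (hf : ∀ᶠ T in atTop, a * φ T - b ≤ f T) :
    ∃ c > 0, ∃ T₀ : ℕ, ∀ T : ℕ, T₀ ≤ T → c * φ T ≤ f T := by
  refine ⟨a / 2, by positivity, eventually_atTop.1 ?_⟩
  filter_upwards [hf, hφ.eventually_ge_atTop (2 * b / a)] with T hfT hφT
  rw [div_le_iff₀ ha] at hφT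
  linarith

lemma exists_nat_between_rate_div {K T : ℕ} {g : ℝ} (hK : 0 < K) (hg : 128 * K ≤ g)
    (hgT : g ≤ 2 * T) :
    ∃ L : ℕ, 0 < L ∧ 4 * (L : ℝ) < g ∧ K * (4 * L) < T / 2 ∧ g / (128 * K) ≤ L := by
  have hK1 : (1 : ℝ) ≤ K := by exact_mod_cast hK
  have hg1 : 1 ≤ g / (128 * K) := by rwa [le_div_iff₀ (by positivity), one_mul]
  have hLg : g / (128 * K) ≤ ⌊g / (64 * K)⌋₊ := by
    have := Nat.lt_floor_add_one (g / (64 * K))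
    have : g / (64 * K) = 2 * (g / (128 * K)) := by field_simp; ring
    linarith
  have hLg' : (⌊g / (64 * K)⌋₊ : ℝ) ≤ g / (64 * K) :=
    Nat.floor_le (div_nonneg (by linarith) (by positivity))
  refine ⟨⌊g / (64 * K)⌋₊, by exact_mod_cast (hg1.trans hLg).trans_lt' one_pos, ?_, ?_, hLg⟩
  · have : g / (64 * K) ≤ g / 64 :=
      div_le_div_of_nonneg_left (by linarith) (by norm_num) (by linarith)
    linarith
  · have hKL : ((8 * (K * (4 * ⌊g / (64 * K)⌋₊)) : ℕ) : ℝ) ≤ T := by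
      rw [le_div_iff₀ (by positivity)] at hLg'
      push_cast
      nlinarith
    have hT : ((64 : ℕ) : ℝ) ≤ T := by push_cast; linarith
    have := Nat.cast_le.1 hKL
    have := Nat.cast_le.1 hT
    omega

end Elementary

section Decomposition

variable {K : ℕ}

/-- For centered samples `y k s`, this dominates the noise of all arms at all sample counts
`≤ M` at once; the samples of the optimal arm are summed backwards from `M`. -/
noncomputable def fluctuation (y : Fin K → ℕ → ℝ) (kstar : Fin K) (ε : ℝ) (M : ℕ) : ℝ :=
  ∑ k ∈ univ.erase kstar, excessSum (fun m => ∑ s ∈ range m, y k s) ε M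
    + excessSum (fun m => ∑ s ∈ Ico (M - m) M, -y kstar s) ε M + ∑ s ∈ range M, y kstar s

/-- The suboptimal arms contribute their gaps minus the upward excursions of their reward sums;
the optimal arm, which lacks the `N` samples of the others out of `M`, contributes the downward
excursion of its tape entries between `M - N` and `M`. -/
lemma gap_mul_sub_fluctuation_le (μ : Fin K → ℝ) {kstar : Fin K} {δ : ℝ}
    (hgap : ∀ k ≠ kstar, δ ≤ μ kstar - μ k) (ε : ℝ) (y : Fin K → ℕ → ℝ) (n : Fin K → ℕ)
    {M : ℕ} (hn : ∑ k, n k = M) :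
    (δ - 2 * ε) * ∑ k ∈ univ.erase kstar, (n k : ℝ) - fluctuation y kstar ε M
      ≤ ∑ k, ((n k : ℝ) * (μ kstar - μ k) - ∑ s ∈ range (n k), y k s) := by
  have hle : ∀ k, n k ≤ M := fun k =>
    hn ▸ single_le_sum (fun _ _ => Nat.zero_le _) (mem_univ k)
  have hsub : ∀ k ∈ univ.erase kstar,
      (δ - ε) * n k - excessSum (fun m => ∑ s ∈ range m, y k s) ε M
        ≤ (n k : ℝ) * (μ kstar - μ k) - ∑ s ∈ range (n k), y k s := by
    intro k hk
    have hexc := le_add_excessSum (fun m => ∑ s ∈ range m, y k s) ε (hle k)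
    have hgap_k := mul_le_mul_of_nonneg_left (hgap k (ne_of_mem_erase hk)) (Nat.cast_nonneg (n k))
    linarith
  have hopt : -(ε * (M - n kstar : ℕ))
        - excessSum (fun m => ∑ s ∈ Ico (M - m) M, -y kstar s) ε M - ∑ s ∈ range M, y kstar s
      ≤ -∑ s ∈ range (n kstar), y kstar s := by
    have hexc := le_add_excessSum (fun m => ∑ s ∈ Ico (M - m) M, -y kstar s) ε
      (Nat.sub_le M (n kstar))
    have htail := sum_range_add_sum_Ico (fun s => y kstar s) (hle kstar)
    rw [Nat.sub_sub_self (hle kstar), sum_neg_distrib] at hexc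
    linarith
  have hN : ((M - n kstar : ℕ) : ℝ) = ∑ k ∈ univ.erase kstar, (n k : ℝ) := by
    rw [← hn, ← add_sum_erase _ _ (mem_univ kstar), Nat.add_sub_cancel_left]
    push_cast
    rfl
  have hsum := sum_le_sum hsub
  rw [sum_sub_distrib, ← mul_sum] at hsum
  rw [← add_sum_erase _ _ (mem_univ kstar), sub_self, mul_zero, zero_sub]
  rw [hN] at hopt
  rw [fluctuation]
  linarith

end Decomposition

section Environment

variable {K : ℕ} {Ω : Type*} [MeasurableSpace Ω] {P : Measure Ω}
  {X : Fin K → ℕ → Ω → ℝ} {U : Fin 2 → ℕ → Ω → ℝ} {D : Fin K → Measure ℝ}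

lemma IsEnv.ae_mem_Icc (hEnv : IsEnv P X U D) : ∀ᵐ ω ∂P, ∀ k s, X k s ω ∈ Icc (0 : ℝ) 1 := by
  simp only [ae_all_iff]
  intro k s
  rw [ae_iff, ← hEnv.2.1 k, ← hEnv.2.2.2.2.1 k s,
    Measure.map_apply (hEnv.2.2.1 k s) measurableSet_Icc.compl]
  rfl

lemma IsEnv.integral_eq_armMean (hEnv : IsEnv P X U D) (k : Fin K) (s : ℕ) :
    ∫ ω, X k s ω ∂P = armMean D k := by
  rw [armMean, ← hEnv.2.2.2.2.1 k s]
  exact (integral_map (hEnv.2.2.1 k s).aemeasurable aestronglyMeasurable_id).symm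

lemma IsEnv.iIndepFun_centered (hEnv : IsEnv P X U D) (k : Fin K) :
    iIndepFun (fun s ω => X k s ω - armMean D k) P :=
  (hEnv.2.2.2.2.2.2.precomp (g := fun s => Sum.inl (k, s)) fun _ _ h => by simpa using h).comp
    (fun _ x => x - armMean D k) fun _ => measurable_id.sub_const _

variable [IsProbabilityMeasure P]

lemma IsEnv.integrable (hEnv : IsEnv P X U D) (k : Fin K) (s : ℕ) : Integrable (X k s) P :=
  Integrable.of_mem_Icc 0 1 (hEnv.2.2.1 k s).aemeasurable (hEnv.ae_mem_Icc.mono fun _ h => h k s)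

lemma IsEnv.hasSubgaussianMGF_centered (hEnv : IsEnv P X U D) (k : Fin K) (s : ℕ) :
    HasSubgaussianMGF (fun ω => X k s ω - armMean D k) (1 / 4) P := by
  have := hasSubgaussianMGF_of_mem_Icc (hEnv.2.2.1 k s).aemeasurable
    (hEnv.ae_mem_Icc.mono fun ω h => h k s)
  rw [hEnv.integral_eq_armMean] at this
  convert this using 1
  norm_num

lemma IsEnv.integrable_fluctuation (hEnv : IsEnv P X U D) (kstar : Fin K) (ε : ℝ) (M : ℕ) :
    Integrable (fun ω => fluctuation (fun k s => X k s ω - armMean D k) kstar ε M) P :=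
  ((integrable_finsetSum _ fun k _ =>
    integrable_excessSum (fun s => (hEnv.hasSubgaussianMGF_centered k s).integrable) _ _ _).add
      (integrable_excessSum (fun s => (hEnv.hasSubgaussianMGF_centered kstar s).neg.integrable)
        _ _ _)).add
    (integrable_finsetSum _ fun s _ => (hEnv.hasSubgaussianMGF_centered kstar s).integrable)

lemma IsEnv.exists_integral_fluctuation_le (hEnv : IsEnv P X U D) (kstar : Fin K) {ε : ℝ}
    (hε : 0 < ε) :
    ∃ C, ∀ M, ∫ ω, fluctuation (fun k s => X k s ω - armMean D k) kstar ε M ∂P ≤ C := by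
  set C₀ := ((1 / 4 : ℝ≥0) : ℝ) / ε * (1 - exp (-(ε ^ 2 / (2 * ((1 / 4 : ℝ≥0) : ℝ)))))⁻¹
  refine ⟨(#(univ.erase kstar) + 1) * C₀, fun M => ?_⟩
  have hsubG := hEnv.hasSubgaussianMGF_centered
  have hup : ∀ k, ∫ ω, excessSum (fun m => ∑ s ∈ range m, (X k s ω - armMean D k)) ε M ∂P
      ≤ C₀ := fun k =>
    integral_excessSum_le (hEnv.iIndepFun_centered k) (by norm_num) (hsubG k) hε
      _ _ fun m _ => card_range m
  have hdown : ∫ ω, excessSum (fun m => ∑ s ∈ Ico (M - m) M, -(X kstar s ω - armMean D kstar))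
      ε M ∂P ≤ C₀ :=
    integral_excessSum_le ((hEnv.iIndepFun_centered kstar).comp (fun _ x => -x)
      fun _ => measurable_neg) (by norm_num) (fun s => (hsubG kstar s).neg) hε
      _ _ fun m hm => by rw [Nat.card_Ico]; omega
  have hcentered : ∫ ω, ∑ s ∈ range M, (X kstar s ω - armMean D kstar) ∂P = 0 := by
    rw [integral_finsetSum _ fun s _ => (hsubG kstar s).integrable]
    refine sum_eq_zero fun s _ => ?_
    rw [integral_sub (hEnv.integrable kstar s) (integrable_const _),
      hEnv.integral_eq_armMean, integral_const]
    simp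
  have hintUp : Integrable (fun ω => ∑ k ∈ univ.erase kstar,
      excessSum (fun m => ∑ s ∈ range m, (X k s ω - armMean D k)) ε M) P :=
    integrable_finsetSum _ fun k _ => integrable_excessSum (fun s => (hsubG k s).integrable) _ _ _
  have hintDown : Integrable (fun ω =>
      excessSum (fun m => ∑ s ∈ Ico (M - m) M, -(X kstar s ω - armMean D kstar)) ε M) P :=
    integrable_excessSum (fun s => (hsubG kstar s).neg.integrable) _ _ _
  have hintUpDown : Integrable (fun ω => ∑ k ∈ univ.erase kstar,
      excessSum (fun m => ∑ s ∈ range m, (X k s ω - armMean D k)) ε M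
        + excessSum (fun m => ∑ s ∈ Ico (M - m) M, -(X kstar s ω - armMean D kstar)) ε M) P :=
    hintUp.add hintDown
  have hupsum := sum_le_sum fun k (_ : k ∈ univ.erase kstar) => hup k
  rw [sum_const, nsmul_eq_mul] at hupsum
  simp only [fluctuation]
  rw [integral_add hintUpDown (integrable_finsetSum _ fun s _ => (hsubG kstar s).integrable),
    integral_add hintUp hintDown,
    integral_finsetSum _ fun k _ => integrable_excessSum (fun s => (hsubG k s).integrable) _ _ _]
  linarith

end Environment

section Regret

variable {K : ℕ} {Ω : Type*} {X : Fin K → ℕ → Ω → ℝ} {U : Fin 2 → ℕ → Ω → ℝ} {A₁ A₂ : Alg K}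

lemma sum_length_mul_gap_sub (μ : Fin K → ℝ) (kstar : Fin K) (T : ℕ) (ω : Ω) :
    ∑ k, ((jointHist X U A₁ A₂ T ω k).length * (μ kstar - μ k)
        - ∑ s ∈ range (jointHist X U A₁ A₂ T ω k).length, (X k s ω - μ k))
      = 2 * T * μ kstar - (∑ t ∈ range T, reward1 X U A₁ A₂ t ω
        + ∑ t ∈ range T, reward2 X U A₁ A₂ t ω) := by
  have hn : ∑ k, ((jointHist X U A₁ A₂ T ω k).length : ℝ) = 2 * T := by
    exact_mod_cast totalCount_jointHist X U A₁ A₂ T ω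
  rw [← sum_add_distrib, sum_range_reward_add_reward]
  simp only [sum_sub_distrib, mul_sub, sum_const, card_range, nsmul_eq_mul, ← sum_mul, hn]
  ring

variable [MeasurableSpace Ω]

lemma measurable_apply_of_countable {ι β : Type*} [MeasurableSpace ι] [Countable ι]
    [MeasurableSingletonClass ι] [MeasurableSpace β] {F : ι → Ω → β} (hF : ∀ i, Measurable (F i))
    {g : Ω → ι} (hg : Measurable g) : Measurable fun ω => F (g ω) ω :=
  (measurable_from_prod_countable_left (f := fun p : Ω × ι => F p.2 p.1) hF).comp
    (measurable_id.prodMk hg)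

lemma measurable_length_jointHist (hm1 : ∀ t, Measurable (arm1 X U A₁ A₂ t))
    (hm2 : ∀ t, Measurable (arm2 X U A₁ A₂ t)) (t : ℕ) (k : Fin K) :
    Measurable fun ω => (jointHist X U A₁ A₂ t ω k).length := by
  induction t with
  | zero => simp [jointHist]
  | succ t ih =>
    simp_rw [length_jointHist_succ]
    exact (ih.add (Measurable.ite (hm1 t (measurableSet_singleton k)) measurable_const
      measurable_const)).add (Measurable.ite (hm2 t (measurableSet_singleton k))
        measurable_const measurable_const)

variable {P : Measure Ω} [IsProbabilityMeasure P] {D : Fin K → Measure ℝ}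

lemma IsEnv.integrable_sum_reward1 (hEnv : IsEnv P X U D)
    (hm1 : ∀ t, Measurable (arm1 X U A₁ A₂ t)) (hm2 : ∀ t, Measurable (arm2 X U A₁ A₂ t))
    (T : ℕ) : Integrable (fun ω => ∑ t ∈ range T, reward1 X U A₁ A₂ t ω) P := by
  refine integrable_finsetSum _ fun t _ => Integrable.of_mem_Icc 0 1 ?_
    (hEnv.ae_mem_Icc.mono fun ω h => h _ _)
  exact (measurable_apply_of_countable (fun k => measurable_apply_of_countable (hEnv.2.2.1 k)
    (measurable_length_jointHist hm1 hm2 t k)) (hm1 t)).aemeasurable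

lemma IsEnv.integrable_sum_reward2 (hEnv : IsEnv P X U D)
    (hm1 : ∀ t, Measurable (arm1 X U A₁ A₂ t)) (hm2 : ∀ t, Measurable (arm2 X U A₁ A₂ t))
    (T : ℕ) : Integrable (fun ω => ∑ t ∈ range T, reward2 X U A₁ A₂ t ω) P := by
  refine integrable_finsetSum _ fun t _ => Integrable.of_mem_Icc 0 1 ?_
    (hEnv.ae_mem_Icc.mono fun ω h => h _ _)
  rw [show reward2 X U A₁ A₂ t = _ from funext (reward2_eq X U A₁ A₂ t)]
  refine (measurable_apply_of_countable (F := fun k ω => X k ((jointHist X U A₁ A₂ t ω k).length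
    + if arm1 X U A₁ A₂ t ω = k then 1 else 0) ω)
      (fun k => measurable_apply_of_countable (hEnv.2.2.1 k) ?_) (hm2 t)).aemeasurable
  exact (measurable_length_jointHist hm1 hm2 t k).add
    (Measurable.ite (hm1 t (measurableSet_singleton k)) measurable_const measurable_const)

lemma expRegret1_add_expRegret2_eq_integral (μstar : ℝ) (T : ℕ)
    (hint1 : Integrable (fun ω => ∑ t ∈ range T, reward1 X U A₁ A₂ t ω) P)
    (hint2 : Integrable (fun ω => ∑ t ∈ range T, reward2 X U A₁ A₂ t ω) P) :
    expRegret1 P X U A₁ A₂ μstar T + expRegret2 P X U A₁ A₂ μstar T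
      = ∫ ω, 2 * T * μstar - (∑ t ∈ range T, reward1 X U A₁ A₂ t ω
        + ∑ t ∈ range T, reward2 X U A₁ A₂ t ω) ∂P := by
  have hint : Integrable (fun ω => ∑ t ∈ range T, reward1 X U A₁ A₂ t ω
      + ∑ t ∈ range T, reward2 X U A₁ A₂ t ω) P := hint1.add hint2
  rw [expRegret1, expRegret2, integral_sub (integrable_const _) hint,
    integral_add hint1 hint2, integral_const]
  simp only [probReal_univ, one_smul]
  ring

lemma IsEnv.exists_le_expRegret1_add_expRegret2 (hEnv : IsEnv P X U D)
    (hm1 : ∀ t, Measurable (arm1 X U A₁ A₂ t)) (hm2 : ∀ t, Measurable (arm2 X U A₁ A₂ t))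
    {kstar k₁ : Fin K} (hk₁ : k₁ ≠ kstar) {δ : ℝ} (hδ : 0 < δ)
    (hgap : ∀ k ≠ kstar, δ ≤ armMean D kstar - armMean D k) :
    ∃ C, ∀ T L : ℕ, (∀ᵐ ω ∂P, L ≤ (jointHist X U A₁ A₂ T ω k₁).length) →
      δ / 2 * L - C ≤ expRegret1 P X U A₁ A₂ (armMean D kstar) T
        + expRegret2 P X U A₁ A₂ (armMean D kstar) T := by
  obtain ⟨C, hC⟩ := hEnv.exists_integral_fluctuation_le kstar (ε := δ / 4) (by positivity)
  refine ⟨C, fun T L hL => ?_⟩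
  have hint1 := hEnv.integrable_sum_reward1 hm1 hm2 T
  have hint2 := hEnv.integrable_sum_reward2 hm1 hm2 T
  have hintF := hEnv.integrable_fluctuation kstar (δ / 4) (2 * T)
  rw [expRegret1_add_expRegret2_eq_integral _ T hint1 hint2]
  calc δ / 2 * L - C ≤ ∫ ω, δ / 2 * L
        - fluctuation (fun k s => X k s ω - armMean D k) kstar (δ / 4) (2 * T) ∂P := by
        rw [integral_sub (integrable_const _) hintF, integral_const]
        simp only [probReal_univ, one_smul]
        linarith [hC (2 * T)]
    _ ≤ _ := by
        refine integral_mono_ae ((integrable_const _).sub hintF)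
          ((integrable_const _).sub (hint1.add hint2)) ?_
        filter_upwards [hL] with ω hω
        rw [← sum_length_mul_gap_sub (armMean D) kstar]
        have hdet := gap_mul_sub_fluctuation_le (armMean D) hgap (δ / 4)
          (fun k s => X k s ω - armMean D k) (fun k => (jointHist X U A₁ A₂ T ω k).length)
          (totalCount_jointHist X U A₁ A₂ T ω)
        have hN : (L : ℝ) ≤ ∑ k ∈ univ.erase kstar, ((jointHist X U A₁ A₂ T ω k).length : ℝ) :=
          (Nat.cast_le.2 hω).trans (single_le_sum
            (f := fun k => ((jointHist X U A₁ A₂ T ω k).length : ℝ)) (fun _ _ => Nat.cast_nonneg _)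
            (mem_erase.2 ⟨hk₁, mem_univ _⟩))
        have := mul_le_mul_of_nonneg_left hN (by positivity : (0 : ℝ) ≤ δ / 2)
        linarith

variable [NeZero K]

lemma IsEnv.exists_pos_mul_le_expRegret_ucb (hEnv : IsEnv P X U D) {α : ℝ} (hα0 : 0 ≤ α)
    (hα1 : α ≤ 1) {A : Alg K} (hm1 : ∀ t, Measurable (arm1 X U A (ucb α) t))
    (hm2 : ∀ t, Measurable (arm2 X U A (ucb α) t)) {kstar k₁ : Fin K} (hk₁ : k₁ ≠ kstar)
    {δ : ℝ} (hδ : 0 < δ) (hgap : ∀ k ≠ kstar, δ ≤ armMean D kstar - armMean D k)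
    {φ : ℕ → ℝ} (hφ : Tendsto φ atTop atTop) {a : ℝ} (ha : 0 < a)
    (hrate : ∀ᶠ T in atTop, a * φ T ≤ explorationRate α T) :
    ∃ c > 0, ∃ T₀ : ℕ, ∀ T : ℕ, T₀ ≤ T → c * φ T ≤
      expRegret1 P X U A (ucb α) (armMean D kstar) T
        + expRegret2 P X U A (ucb α) (armMean D kstar) T := by
  obtain ⟨C, hC⟩ := hEnv.exists_le_expRegret1_add_expRegret2 hm1 hm2 hk₁ hδ hgap
  have hK : (0 : ℝ) < K := by exact_mod_cast Nat.pos_of_neZero K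
  refine exists_pos_mul_le_of_tendsto hφ (a := δ * a / (256 * K)) (b := C) (by positivity) ?_
  filter_upwards [hrate, hφ.eventually_ge_atTop (128 * K / a)] with T hgT hφT
  set g := explorationRate α T
  obtain ⟨L, hL, hrateL, hwin, hLg⟩ := exists_nat_between_rate_div (Nat.pos_of_neZero K)
    (by rw [div_le_iff₀ ha] at hφT; linarith) (explorationRate_le hα0 hα1 T)
  have hbound := hC T L (hEnv.ae_mem_Icc.mono fun ω hω =>
    le_length_jointHist_ucb X U A hα0 hω hL hrateL hwin k₁)
  calc δ * a / (256 * K) * φ T - C = δ / (256 * K) * (a * φ T) - C := by ring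
    _ ≤ δ / (256 * K) * g - C := by gcongr
    _ = δ / 2 * (g / (128 * K)) - C := by field_simp; ring
    _ ≤ δ / 2 * L - C := by gcongr
    _ ≤ _ := hbound

end Regret

/-- Proposition 3: when `UCB_α` runs jointly with any other algorithm `A` under data
sharing, the sum of the two expected regrets is `Ω(log T)` if `α = 0` and `Ω(T^α)` if
`0 < α ≤ 1`. -/
theorem ucb_with_any_sum_regret_lower
    (K : ℕ) [NeZero K] (hK : 2 ≤ K)
    {Ω : Type*} [MeasurableSpace Ω] (P : MeasureTheory.Measure Ω)
    [MeasureTheory.IsProbabilityMeasure P]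
    (X : Fin K → ℕ → Ω → ℝ) (U : Fin 2 → ℕ → Ω → ℝ)
    (D : Fin K → MeasureTheory.Measure ℝ) (hEnv : IsEnv P X U D)
    (kstar : Fin K) (hbest : ∀ k : Fin K, k ≠ kstar → armMean D k < armMean D kstar)
    (α : ℝ) (hα0 : 0 ≤ α) (hα1 : α ≤ 1) :
    ∀ A : Alg K,
      (∀ t, Measurable (arm1 X U A (ucb α) t)) →
      (∀ t, Measurable (arm2 X U A (ucb α) t)) →
      (α = 0 → ∃ c > 0, ∃ T₀ : ℕ, ∀ T : ℕ, T₀ ≤ T →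
        c * Real.log T ≤
          expRegret1 P X U A (ucb α) (armMean D kstar) T
            + expRegret2 P X U A (ucb α) (armMean D kstar) T) ∧
      (0 < α → ∃ c > 0, ∃ T₀ : ℕ, ∀ T : ℕ, T₀ ≤ T →
        c * (T : ℝ) ^ α ≤
          expRegret1 P X U A (ucb α) (armMean D kstar) T
            + expRegret2 P X U A (ucb α) (armMean D kstar) T) := by
  intro A hm1 hm2
  have : Nontrivial (Fin K) := Fin.nontrivial_iff_two_le.2 hK
  obtain ⟨k₁, hk₁⟩ := exists_ne kstar
  obtain ⟨δ, hδ, hgap⟩ := exists_pos_le_sub_of_lt hbest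
  refine ⟨fun h0 => ?_, fun hα => ?_⟩
  · exact hEnv.exists_pos_mul_le_expRegret_ucb hα0 hα1 hm1 hm2 hk₁ hδ hgap
      (tendsto_log_atTop.comp tendsto_natCast_atTop_atTop) two_pos
      (Eventually.of_forall fun T => by simp [h0, explorationRate_zero])
  · have hpow := (tendsto_rpow_atTop hα).comp tendsto_natCast_atTop_atTop
    refine hEnv.exists_pos_mul_le_expRegret_ucb hα0 hα1 hm1 hm2 hk₁ hδ hgap hpow (inv_pos.2 hα) ?_
    filter_upwards [hpow.eventually_ge_atTop 2] with T hT
    simpa [div_eq_inv_mul] using rpow_div_le_explorationRate hα hT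

end BanditAB
end

section
/- Fix K ≥ 2, α ∈ [0,1], Δ_min ∈ (0,1], and C ≥ max{80K, 32K/Δ_min²}. For t = K+1, …, T−1, let X_t be independent Bernoulli random variables with P(X_t = 1) = ε_t/K, where ε_t = min{1, C/(2t−2)^{1−α}}, and let N = Σ_{t=K+1}^{T−1} X_t. Then for every T ≥ (C+1)², P( N ≤ (4/Δ_min²) log T ) ≤ 1/T². -/
/-!
Chernoff's bound with parameter `log 2` gives `P(N ≤ a) ≤ 2^a · exp(-E[N]/2)`, because the moment
generating function of a Bernoulli(`p`) variable at `-log 2` is `1 - p/2 ≤ exp(-p/2)`.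
The mean is large: `ε_t ≥ C/(2t-2+C) ≥ (C/2)(log(2t+C) - log(2t-2+C))`, which telescopes to
`(C/2) log((2T-2+C)/(2K+C)) ≥ (C/4) log T` since `2K+C ≤ 2√T`. The constraints on `C` then push
the exponent `a log 2 - E[N]/2` below `-2 log T`.
-/

open MeasureTheory Real

lemma Real.log_add_sub_log_le_div {x : ℝ} (hx : 0 < x) {h : ℝ} (hh : 0 ≤ h) :
    log (x + h) - log x ≤ h / x := by
  rw [← log_div (by positivity) hx.ne']
  linarith [log_le_sub_one_of_pos (show 0 < (x + h) / x by positivity),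
    show (x + h) / x = 1 + h / x by field_simp]

namespace ProbabilityTheory

variable {Ω ι : Type*} [MeasurableSpace Ω] {P : Measure Ω} [IsProbabilityMeasure P]

lemma mgf_of_forall_eq_zero_or_one {Y : Ω → ℝ} (hY : Measurable Y)
    (h01 : ∀ ω, Y ω = 0 ∨ Y ω = 1) (θ : ℝ) :
    mgf Y P θ = 1 + (exp θ - 1) * P.real {ω | Y ω = 1} := by
  have hs : MeasurableSet {ω | Y ω = 1} := hY (measurableSet_singleton 1)
  have hexp : (fun ω ↦ exp (θ * Y ω))
      = fun ω ↦ 1 + (exp θ - 1) * {ω | Y ω = 1}.indicator 1 ω := by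
    ext ω
    rcases h01 ω with h | h <;> simp [h, Set.indicator]
  rw [mgf, hexp, integral_add (integrable_const 1)
    (((integrable_const 1).indicator hs).const_mul _), integral_const_mul,
    integral_indicator_one hs]
  simp

lemma measureReal_sum_le_le_exp_of_forall_eq_zero_or_one {X : ι → Ω → ℝ}
    (hmeas : ∀ i, Measurable (X i)) (h01 : ∀ i ω, X i ω = 0 ∨ X i ω = 1)
    (hindep : iIndepFun X P) (s : Finset ι) (a : ℝ) {θ : ℝ} (hθ : 0 ≤ θ) :
    P.real {ω | ∑ i ∈ s, X i ω ≤ a}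
      ≤ exp (θ * a - (1 - exp (-θ)) * ∑ i ∈ s, P.real {ω | X i ω = 1}) := by
  have hexp_int : ∀ i, Integrable (fun ω ↦ exp (-θ * X i ω)) P := fun i ↦ by
    refine (integrable_const 1).mono' (by fun_prop) (.of_forall fun ω ↦ ?_)
    rcases h01 i ω with h | h <;> simp [h, hθ]
  have hmgf : ∀ i, mgf (X i) P (-θ) ≤ exp ((exp (-θ) - 1) * P.real {ω | X i ω = 1}) := fun i ↦ by
    rw [mgf_of_forall_eq_zero_or_one (hmeas i) (h01 i)]
    linarith [add_one_le_exp ((exp (-θ) - 1) * P.real {ω | X i ω = 1})]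
  have hchernoff := measure_le_le_exp_mul_mgf a (neg_nonpos.mpr hθ)
    (hindep.integrable_exp_mul_sum hmeas fun i _ ↦ hexp_int i) (μ := P) (X := ∑ i ∈ s, X i)
  simp only [Finset.sum_apply, neg_neg] at hchernoff
  calc P.real {ω | ∑ i ∈ s, X i ω ≤ a}
      ≤ exp (θ * a) * ∏ i ∈ s, mgf (X i) P (-θ) := by
        rwa [← hindep.mgf_sum hmeas]
    _ ≤ exp (θ * a) * ∏ i ∈ s, exp ((exp (-θ) - 1) * P.real {ω | X i ω = 1}) := by
        gcongr with i
        · exact fun i _ ↦ mgf_nonneg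
        · exact hmgf i
    _ = _ := by
        rw [← exp_sum, ← exp_add, ← Finset.mul_sum]
        ring_nf

end ProbabilityTheory

/-- The exploration rate `ε_t` of the ε-greedy algorithm. -/
noncomputable def explorationRate (α C : ℝ) (t : ℕ) : ℝ :=
  min 1 (C / (2 * (t : ℝ) - 2) ^ (1 - α))

lemma div_add_le_min_one_div_rpow {x : ℝ} (hx : 1 ≤ x) {α : ℝ} (hα : 0 ≤ α) {C : ℝ}
    (hC : 0 ≤ C) : C / (x + C) ≤ min 1 (C / x ^ (1 - α)) := by
  have hxα : x ^ (1 - α) ≤ x := by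
    simpa using rpow_le_rpow_of_exponent_le hx (by linarith : 1 - α ≤ 1)
  refine le_min ((div_le_one (by linarith)).mpr (by linarith)) ?_
  exact div_le_div_of_nonneg_left hC (by positivity) (by linarith)

lemma half_mul_log_sub_le_explorationRate {α C : ℝ} (hα : 0 ≤ α) (hC : 0 < C) {t : ℕ}
    (ht : 2 ≤ t) :
    C / 2 * (log (2 * ((t + 1 : ℕ) : ℝ) - 2 + C) - log (2 * (t : ℝ) - 2 + C))
      ≤ explorationRate α C t := by
  have ht' : (2 : ℝ) ≤ t := by exact_mod_cast ht
  calc C / 2 * (log (2 * ((t + 1 : ℕ) : ℝ) - 2 + C) - log (2 * (t : ℝ) - 2 + C))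
      = C / 2 * (log ((2 * (t : ℝ) - 2 + C) + 2) - log (2 * (t : ℝ) - 2 + C)) := by
        push_cast; ring_nf
    _ ≤ C / 2 * (2 / (2 * (t : ℝ) - 2 + C)) := by
        gcongr
        exact log_add_sub_log_le_div (by linarith) zero_le_two
    _ = C / (2 * (t : ℝ) - 2 + C) := by ring
    _ ≤ explorationRate α C t := div_add_le_min_one_div_rpow (by linarith) hα hC.le

lemma mul_log_le_sum_explorationRate {K T : ℕ} (hK : 1 ≤ K) {α C : ℝ} (hα : 0 ≤ α)
    (hKC : 2 * (K : ℝ) ≤ C) (hT : (C + 1) ^ 2 ≤ T) :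
    C / 4 * log T ≤ ∑ t ∈ Finset.Icc (K + 1) (T - 1), explorationRate α C t := by
  have hK1 : (1 : ℝ) ≤ K := by exact_mod_cast hK
  have hKT : K + 2 ≤ T := by
    have : (K : ℝ) + 2 ≤ T := by nlinarith
    exact_mod_cast this
  have hT0 : (0 : ℝ) < T := by nlinarith
  have hlog_start : log (2 * ((K + 1 : ℕ) : ℝ) - 2 + C) ≤ log 2 + log T / 2 := by
    have hsqrt : C + 1 ≤ √T := le_sqrt_of_sq_le hT
    rw [← log_sqrt hT0.le, ← log_mul two_ne_zero (by positivity)]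
    gcongr
    · push_cast; linarith
    · push_cast; linarith
  have hlog_end : log 2 + log T ≤ log (2 * ((T - 1 + 1 : ℕ) : ℝ) - 2 + C) := by
    rw [← log_mul two_ne_zero hT0.ne', Nat.sub_add_cancel (by omega)]
    gcongr
    linarith
  calc C / 4 * log T
      ≤ C / 2 * (log (2 * ((T - 1 + 1 : ℕ) : ℝ) - 2 + C)
          - log (2 * ((K + 1 : ℕ) : ℝ) - 2 + C)) := by
        nlinarith
    _ = ∑ t ∈ Finset.Icc (K + 1) (T - 1),
          C / 2 * (log (2 * ((t + 1 : ℕ) : ℝ) - 2 + C) - log (2 * (t : ℝ) - 2 + C)) := by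
        rw [← Finset.mul_sum,
          Finset.sum_Icc_sub (by omega) fun t : ℕ ↦ log (2 * (t : ℝ) - 2 + C)]
    _ ≤ ∑ t ∈ Finset.Icc (K + 1) (T - 1), explorationRate α C t :=
        Finset.sum_le_sum fun t ht ↦ half_mul_log_sub_le_explorationRate hα (by linarith)
          (by have := (Finset.mem_Icc.mp ht).1; omega)

lemma log_two_mul_add_two_le {u v : ℝ} (hu : 0 ≤ u) (huv : u ≤ v) (hv : 10 ≤ v) :
    log 2 * u + 2 ≤ v := by
  nlinarith [log_two_lt_d9]

theorem exploration_pulls_probability_bound_general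
    (K T : ℕ) (hK : 2 ≤ K)
    (α : ℝ) (hα0 : 0 ≤ α)
    (Δmin : ℝ) (hΔ0 : 0 < Δmin)
    (C : ℝ) (hC : max (80 * (K : ℝ)) (32 * K / Δmin ^ 2) ≤ C)
    {Ω : Type*} [MeasurableSpace Ω] (P : Measure Ω) [IsProbabilityMeasure P]
    (X : ℕ → Ω → ℝ)
    (hmeas : ∀ t, Measurable (X t))
    (h01 : ∀ t ω, X t ω = 0 ∨ X t ω = 1)
    (hdist : ∀ t, K + 1 ≤ t → t ≤ T - 1 →
      P {ω | X t ω = 1}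
        = ENNReal.ofReal (min 1 (C / (2 * (t : ℝ) - 2) ^ (1 - α)) / K))
    (hindep : ProbabilityTheory.iIndepFun X P)
    (hT : ((C + 1) ^ 2 : ℝ) ≤ T) :
    (P {ω | (∑ t ∈ Finset.Icc (K + 1) (T - 1), X t ω)
        ≤ 4 / Δmin ^ 2 * Real.log T}).toReal ≤ 1 / (T : ℝ) ^ 2 := by
  obtain ⟨hC80, hC32⟩ := max_le_iff.mp hC
  have hK0 : (0 : ℝ) < K := by positivity
  have hT0 : (0 : ℝ) < T := by nlinarith
  have hlogT : 0 ≤ log T := log_nonneg (by nlinarith)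
  have hprob : ∀ t ∈ Finset.Icc (K + 1) (T - 1),
      P.real {ω | X t ω = 1} = explorationRate α C t / K := fun t ht ↦ by
    obtain ⟨ht1, ht2⟩ := Finset.mem_Icc.mp ht
    have ht' : (K : ℝ) + 1 ≤ t := by exact_mod_cast ht1
    rw [measureReal_def, hdist t ht1 ht2, ENNReal.toReal_ofReal]
    · rfl
    · exact div_nonneg (le_min zero_le_one (div_nonneg (by linarith)
        (rpow_nonneg (by linarith) _))) hK0.le
  have hmean : C / (8 * K) * log T ≤ (1 - exp (-log 2)) *
      ∑ t ∈ Finset.Icc (K + 1) (T - 1), P.real {ω | X t ω = 1} := by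
    rw [Finset.sum_congr rfl hprob, ← Finset.sum_div, exp_neg, exp_log two_pos]
    calc C / (8 * K) * log T = (1 - 2⁻¹) * (C / 4 * log T / K) := by field_simp; ring
      _ ≤ _ := by gcongr; exact mul_log_le_sum_explorationRate (by omega) hα0 (by linarith) hT
  have hrate : log 2 * (4 / Δmin ^ 2) + 2 ≤ C / (8 * K) := by
    refine log_two_mul_add_two_le (by positivity) ?_
      ((le_div_iff₀ (by positivity)).mpr (by linarith))
    rw [div_le_div_iff₀ (by positivity) (by positivity)]
    nlinarith [(div_le_iff₀ (by positivity : (0 : ℝ) < Δmin ^ 2)).mp hC32]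
  calc (P {ω | ∑ t ∈ Finset.Icc (K + 1) (T - 1), X t ω ≤ 4 / Δmin ^ 2 * log T}).toReal
      ≤ exp (log 2 * (4 / Δmin ^ 2 * log T) - (1 - exp (-log 2)) *
          ∑ t ∈ Finset.Icc (K + 1) (T - 1), P.real {ω | X t ω = 1}) :=
        ProbabilityTheory.measureReal_sum_le_le_exp_of_forall_eq_zero_or_one hmeas h01 hindep _ _
          (log_nonneg one_le_two)
    _ ≤ exp (-(2 * log T)) := exp_le_exp.mpr (by nlinarith)
    _ = 1 / (T : ℝ) ^ 2 := by
        rw [exp_neg, two_mul, exp_add, exp_log hT0, one_div, sq]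

/-- The number of uniform-exploration pulls of a fixed arm by the ε-greedy algorithm with
exploration probability `ε_t = min {1, C/(2t-2)^(1-α)}` over `K` arms, i.e. the sum `N` of
independent Bernoulli variables `X_t` with `P(X_t = 1) = ε_t / K` for
`t = K+1, …, T-1`, satisfies `P(N ≤ (4/Δ_min²) log T) ≤ 1/T²` whenever
`K ≥ 2`, `α ∈ [0,1]`, `Δ_min ∈ (0,1]`, `C ≥ max {80K, 32K/Δ_min²}` and `T ≥ (C+1)²`. -/
theorem exploration_pulls_probability_bound
    (K T : ℕ) (hK : 2 ≤ K)
    (α : ℝ) (hα0 : 0 ≤ α) (hα1 : α ≤ 1)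
    (Δmin : ℝ) (hΔ0 : 0 < Δmin) (hΔ1 : Δmin ≤ 1)
    (C : ℝ) (hC : max (80 * (K : ℝ)) (32 * K / Δmin ^ 2) ≤ C)
    {Ω : Type*} [MeasurableSpace Ω] (P : Measure Ω) [IsProbabilityMeasure P]
    (X : ℕ → Ω → ℝ)
    (hmeas : ∀ t, Measurable (X t))
    (h01 : ∀ t ω, X t ω = 0 ∨ X t ω = 1)
    (hdist : ∀ t, K + 1 ≤ t → t ≤ T - 1 →
      P {ω | X t ω = 1}
        = ENNReal.ofReal (min 1 (C / (2 * (t : ℝ) - 2) ^ (1 - α)) / K))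
    (hindep : ProbabilityTheory.iIndepFun X P)
    (hT : ((C + 1) ^ 2 : ℝ) ≤ T) :
    (P {ω | (∑ t ∈ Finset.Icc (K + 1) (T - 1), X t ω)
        ≤ 4 / Δmin ^ 2 * Real.log T}).toReal ≤ 1 / (T : ℝ) ^ 2 :=
  exploration_pulls_probability_bound_general K T hK α hα0 Δmin hΔ0 C hC P X hmeas h01 hdist hindep
    hT
end
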